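/- Let Z₀ and Z₁ be symmetric positive definite n×n real matrices, let μ₁, …, μ_n be the eigenvalues (with multiplicity) of A := Z₁^(-1/2)·Z₀·Z₁^(-1/2), and set δ := √(Σ_{i=1}^n (log μ_i)²). Then δ² ≤ h(Z₀, Z₁) ≤ 2·(cosh(δ) − 1). -/

import Mathlib

open Matrix

section
open scoped ComplexOrder

/-- The positive semidefinite square root of a positive semidefinite matrix
(removed from Mathlib; restored with its old definition). -/
noncomputable def Matrix.PosSemidef.sqrt {n 𝕜 : Type*} [Fintype n] [RCLike 𝕜] [DecidableEq n]
    {A : Matrix n n 𝕜} (hA : A.PosSemidef) : Matrix n n 𝕜 :=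
  hA.isHermitian.eigenvectorUnitary.1 * diagonal ((↑) ∘ (√·) ∘ hA.isHermitian.eigenvalues) *
    (star hA.isHermitian.eigenvectorUnitary : Matrix n n 𝕜)

end

/-! With `S = Z₁^(1/2)` and `A = S⁻¹ Z₀ S⁻¹`, cyclicity of the trace gives `tr (Z₀ Z₁⁻¹) = tr A` and
`tr (Z₀⁻¹ Z₁) = tr A⁻¹`, so for the eigenvalues `μᵢ > 0` of `A` and `tᵢ = log μᵢ`,
`h(Z₀, Z₁) = ∑ᵢ (μᵢ + μᵢ⁻¹ - 2) = 2 ∑ᵢ (cosh tᵢ - 1)`, while `δ² = ∑ᵢ tᵢ²`.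
Both bounds then come from the series `cosh t - 1 = ∑_{k ≥ 1} t^(2k) / (2k)!` with nonnegative
terms: its first term gives `t² ≤ 2 (cosh t - 1)`, and `∑ᵢ (tᵢ²)^k ≤ (∑ᵢ tᵢ²)^k = δ^(2k)`
compares the series termwise with that of `cosh δ - 1`. -/

theorem Finset.sum_pow_le_pow_sum {ι R : Type*} [Semiring R] [PartialOrder R] [IsOrderedRing R]
    (s : Finset ι) {f : ι → R} (hf : ∀ i ∈ s, 0 ≤ f i) {k : ℕ} (hk : k ≠ 0) :
    ∑ i ∈ s, f i ^ k ≤ (∑ i ∈ s, f i) ^ k := by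
  induction s using Finset.cons_induction with
  | empty => simp [hk]
  | cons a s ha ih =>
    rw [sum_cons, sum_cons]
    have hs := (forall_mem_cons ha _).1 hf
    calc f a ^ k + ∑ i ∈ s, f i ^ k ≤ f a ^ k + (∑ i ∈ s, f i) ^ k := by gcongr; exact ih hs.2
      _ ≤ _ := pow_add_pow_le hs.1 (sum_nonneg hs.2) hk

namespace Real

open Nat in
theorem hasSum_cosh_sub_one (x : ℝ) :
    HasSum (fun k ↦ x ^ (2 * (k + 1)) / (2 * (k + 1))!) (cosh x - 1) := by
  simpa using (hasSum_nat_add_iff' 1).2 (hasSum_cosh x)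

theorem sq_le_two_mul_cosh_sub_one (x : ℝ) : x ^ 2 ≤ 2 * (cosh x - 1) := by
  have h := le_hasSum (hasSum_cosh_sub_one x) 0 fun _ _ ↦ by rw [pow_mul]; positivity
  norm_num at h
  linarith

theorem sum_cosh_sub_one_le_cosh_sqrt_sum_sq {ι : Type*} (s : Finset ι) (x : ι → ℝ) :
    ∑ i ∈ s, (cosh (x i) - 1) ≤ cosh √(∑ i ∈ s, x i ^ 2) - 1 := by
  refine hasSum_le (fun k ↦ ?_) (hasSum_sum fun i _ ↦ hasSum_cosh_sub_one (x i))
    (hasSum_cosh_sub_one _)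
  simp only [pow_mul, sq_sqrt (Finset.sum_nonneg fun i _ ↦ sq_nonneg (x i)), ← Finset.sum_div]
  gcongr
  exact s.sum_pow_le_pow_sum (fun i _ ↦ sq_nonneg (x i)) k.succ_ne_zero

end Real

namespace Matrix

open scoped ComplexOrder

variable {n 𝕜 : Type*} [Fintype n] [DecidableEq n] [RCLike 𝕜] {A : Matrix n n 𝕜}

theorem IsHermitian.trace_cfc (hA : A.IsHermitian) (f : ℝ → ℝ) :
    (cfc f A).trace = ∑ i, (f (hA.eigenvalues i) : 𝕜) := by
  rw [hA.cfc_eq, IsHermitian.cfc, Unitary.conjStarAlgAut_apply, trace_mul_cycle,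
    Unitary.coe_star_mul_self, one_mul, trace_diagonal]
  rfl

theorem IsHermitian.trace_inv (hA : A.IsHermitian) (hA' : IsUnit A) :
    A⁻¹.trace = ∑ i, ((hA.eigenvalues i)⁻¹ : 𝕜) := by
  rw [nonsing_inv_eq_ringInverse, ← cfc_ringInverse_id (R := ℝ) A hA' hA.isSelfAdjoint, hA.trace_cfc]
  simp only [RCLike.ofReal_inv]

namespace PosSemidef

theorem sqrt_eq_cfc (hA : A.PosSemidef) : hA.sqrt = cfc Real.sqrt A := by
  rw [hA.isHermitian.cfc_eq, IsHermitian.cfc, Unitary.conjStarAlgAut_apply]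
  rfl

theorem isHermitian_sqrt (hA : A.PosSemidef) : hA.sqrt.IsHermitian :=
  hA.sqrt_eq_cfc ▸ cfc_predicate _ _

theorem sqrt_mul_self (hA : A.PosSemidef) : hA.sqrt * hA.sqrt = A := by
  have h : Set.EqOn (fun x ↦ √x * √x) id (spectrum ℝ A) := fun x hx ↦ by
    obtain ⟨i, rfl⟩ := hA.isHermitian.spectrum_real_eq_range_eigenvalues ▸ hx
    exact Real.mul_self_sqrt (hA.eigenvalues_nonneg i)
  rw [hA.sqrt_eq_cfc, ← cfc_mul .., cfc_congr h, cfc_id ℝ A hA.isHermitian.isSelfAdjoint]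

end PosSemidef

theorem PosDef.isUnit_sqrt (hA : A.PosDef) : IsUnit hA.posSemidef.sqrt := by
  have h := hA.isUnit
  rw [← hA.posSemidef.sqrt_mul_self] at h
  exact isUnit_of_mul_isUnit_left h

theorem trace_mul_inv_mul_self {α : Type*} [CommRing α] (Z S : Matrix n n α) :
    (Z * (S * S)⁻¹).trace = (S⁻¹ * Z * S⁻¹).trace := by
  rw [mul_inv_rev, ← Matrix.mul_assoc, trace_mul_comm, Matrix.mul_assoc]

theorem trace_inv_mul_mul_self {α : Type*} [CommRing α] (Z : Matrix n n α) {S : Matrix n n α}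
    (hS : IsUnit S) : (Z⁻¹ * (S * S)).trace = (S⁻¹ * Z * S⁻¹)⁻¹.trace := by
  rw [mul_inv_rev, mul_inv_rev, nonsing_inv_nonsing_inv _ ((isUnit_iff_isUnit_det S).1 hS),
    ← Matrix.mul_assoc, trace_mul_comm]

theorem PosDef.trace_add_trace_inv_sub_card {A : Matrix n n ℝ} (hA : A.PosDef) :
    A.trace + A⁻¹.trace - 2 * Fintype.card n =
      2 * ∑ i, (Real.cosh (Real.log (hA.isHermitian.eigenvalues i)) - 1) := by
  rw [hA.isHermitian.trace_eq_sum_eigenvalues, hA.isHermitian.trace_inv hA.isUnit,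
    ← Finset.sum_add_distrib, Finset.mul_sum]
  simp only [Real.cosh_log (hA.eigenvalues_pos _), RCLike.ofReal_real_eq_id, id, mul_sub,
    mul_div_cancel₀ _ (two_ne_zero' ℝ), Finset.sum_sub_distrib]
  simp [mul_comm]

end Matrix

theorem geodesic_sq_le_divergence_le_cosh_general
    (n : ℕ) (Z₀ Z₁ : Matrix (Fin n) (Fin n) ℝ)
    (hZ₀ : Z₀.PosDef) (hZ₁ : Z₁.PosDef)
    (hA : ((PosSemidef.sqrt hZ₁.posSemidef)⁻¹ * Z₀ * (PosSemidef.sqrt hZ₁.posSemidef)⁻¹).IsHermitian)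
    (δ : ℝ) (hδ : δ = Real.sqrt (∑ i, (Real.log (hA.eigenvalues i)) ^ 2)) :
    δ ^ 2 ≤ (Z₀ * Z₁⁻¹).trace + (Z₀⁻¹ * Z₁).trace - 2 * n ∧
      (Z₀ * Z₁⁻¹).trace + (Z₀⁻¹ * Z₁).trace - 2 * n ≤ 2 * (Real.cosh δ - 1) := by
  have hS : IsUnit hZ₁.posSemidef.sqrt := hZ₁.isUnit_sqrt
  have hApos : (hZ₁.posSemidef.sqrt⁻¹ * Z₀ * hZ₁.posSemidef.sqrt⁻¹).PosDef := by
    have h := (IsUnit.posDef_star_left_conjugate_iff (isUnit_nonsing_inv_iff.2 hS)).2 hZ₀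
    rwa [star_eq_conjTranspose, conjTranspose_nonsing_inv, hZ₁.posSemidef.isHermitian_sqrt.eq] at h
  have hdiv : (Z₀ * Z₁⁻¹).trace + (Z₀⁻¹ * Z₁).trace - 2 * n =
      2 * ∑ i, (Real.cosh (Real.log (hA.eigenvalues i)) - 1) := by
    have h := hApos.trace_add_trace_inv_sub_card
    rw [Fintype.card_fin] at h
    conv_lhs => rw [← hZ₁.posSemidef.sqrt_mul_self]
    rwa [trace_mul_inv_mul_self, trace_inv_mul_mul_self _ hS]
  have hδsq : δ ^ 2 = ∑ i, Real.log (hA.eigenvalues i) ^ 2 := by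
    rw [hδ, Real.sq_sqrt (by positivity)]
  rw [hdiv]
  constructor
  · rw [hδsq, Finset.mul_sum]
    exact Finset.sum_le_sum fun i _ ↦ Real.sq_le_two_mul_cosh_sub_one _
  · rw [hδ]
    gcongr
    exact Real.sum_cosh_sub_one_le_cosh_sqrt_sum_sq _ _

/-- For symmetric positive definite `Z₀ Z₁`, with `μᵢ` the eigenvalues of
`A = Z₁^(-1/2) * Z₀ * Z₁^(-1/2)` and `δ = √(∑ i, (log μᵢ)²)` (the geodesic
distance), the divergence `h(Z₀, Z₁)` satisfies `δ² ≤ h(Z₀,Z₁) ≤ 2 (cosh δ - 1)`. -/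
theorem geodesic_sq_le_divergence_le_cosh
    (n : ℕ) (hn : 1 ≤ n) (Z₀ Z₁ : Matrix (Fin n) (Fin n) ℝ)
    (hZ₀ : Z₀.PosDef) (hZ₁ : Z₁.PosDef)
    (hA : ((PosSemidef.sqrt hZ₁.posSemidef)⁻¹ * Z₀ * (PosSemidef.sqrt hZ₁.posSemidef)⁻¹).IsHermitian)
    (δ : ℝ) (hδ : δ = Real.sqrt (∑ i, (Real.log (hA.eigenvalues i)) ^ 2)) :
    δ ^ 2 ≤ (Z₀ * Z₁⁻¹).trace + (Z₀⁻¹ * Z₁).trace - 2 * n ∧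
      (Z₀ * Z₁⁻¹).trace + (Z₀⁻¹ * Z₁).trace - 2 * n ≤ 2 * (Real.cosh δ - 1) :=
  geodesic_sq_le_divergence_le_cosh_general n Z₀ Z₁ hZ₀ hZ₁ hA δ hδ
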